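/- Let \(\mathcal{D}\) be a quasi-symmetric 2-(37,9,8) design with intersection numbers 1 and 3, and let C be a doubly even self-dual code of length 40 containing the linear span \(C_3 \subseteq \mathbb{F}_2^{40}\) of the vectors \((\chi_B, 1, 1, 1)\) over the blocks B of \(\mathcal{D}\). Then C contains no codeword of weight 8 whose support contains the last three coordinates (coordinates 38, 39, 40). -/

import Mathlib

/-- The weight of a binary vector: its number of nonzero coordinates. -/
def wt {ι : Type*} [Fintype ι] (x : ι → ZMod 2) : ℕ :=
  (Finset.univ.filter fun i => x i ≠ 0).card

/-- The characteristic vector of a block. -/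
def chi {v : ℕ} (b : Finset (Fin v)) : Fin v → ZMod 2 :=
  fun i => if i ∈ b then 1 else 0

/-- The generator `(χ_B, 1, 1, 1)` of the code `C₃ ⊆ 𝔽₂^{40}` (with `v = 37`). -/
def gen3 {v : ℕ} (b : Finset (Fin v)) : Fin v ⊕ Fin 3 → ZMod 2 :=
  Sum.elim (chi b) fun _ => 1

/-!
Let `S` be the support of a codeword `c` of the statement among the 37 points, so `#S = 5`. As `c` is
orthogonal to every `(χ_B, 1, 1, 1)`, every block meets `S` in `1`, `3` or `5` points. For a
2-(37,9,8) design there are 148 blocks, each point lies on 36 of them and each pair on 8, so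
`∑ |S ∩ B| = 5 · 36` and `∑ C(|S ∩ B|, 2) = C(5, 2) · 8`. As `(x - 1)(x - 3)` vanishes at
`x = 1, 3` and equals `8` at `x = 5`, these sums force exactly 8 blocks to contain `S`. Two of
them meet in at least 5 points, contradicting the intersection numbers 1 and 3.
-/

open Finset

section Code

variable {ι : Type*} [Fintype ι]

def supp (x : ι → ZMod 2) : Finset ι := {i | x i ≠ 0}

theorem wt_eq_wt_comp_inl_add_wt_comp_inr {κ : Type*} [Fintype κ] (x : ι ⊕ κ → ZMod 2) :
    wt x = wt (x ∘ Sum.inl) + wt (x ∘ Sum.inr) := by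
  simp only [wt, card_filter, Fintype.sum_sum_type, Function.comp_apply]

theorem wt_eq_card_of_forall_ne_zero {x : ι → ZMod 2} (hx : ∀ i, x i ≠ 0) :
    wt x = Fintype.card ι := by
  simp [wt, hx]

end Code

theorem ZMod.eq_one_of_ne_zero {a : ZMod 2} (ha : a ≠ 0) : a = 1 :=
  Fin.eq_one_of_ne_zero a ha

theorem sum_mul_chi {v : ℕ} (x : Fin v → ZMod 2) (b : Finset (Fin v)) :
    ∑ i, x i * chi b i = #(supp x ∩ b) :=
  calc ∑ i, x i * chi b i = ∑ i ∈ b, x i := by simp [chi, mul_ite]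
    _ = ∑ i ∈ b with x i ≠ 0, x i := (sum_filter_ne_zero b).symm
    _ = ∑ i ∈ b with x i ≠ 0, 1 :=
      sum_congr rfl fun i hi => ZMod.eq_one_of_ne_zero (mem_filter.mp hi).2
    _ = #(supp x ∩ b) := by rw [supp, filter_inter, univ_inter, sum_const, nsmul_one]

theorem sum_mul_gen3 {v : ℕ} (x : Fin v ⊕ Fin 3 → ZMod 2) (b : Finset (Fin v)) :
    ∑ i, x i * gen3 b i = #(supp (x ∘ Sum.inl) ∩ b) + ∑ j, x (Sum.inr j) := by
  simp only [Fintype.sum_sum_type, gen3, Sum.elim_inl, Sum.elim_inr, mul_one]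
  rw [← sum_mul_chi]
  rfl

theorem odd_card_supp_inter_of_sum_mul_gen3_eq_zero {v : ℕ} {x : Fin v ⊕ Fin 3 → ZMod 2}
    (hx : ∀ j, x (Sum.inr j) ≠ 0) {b : Finset (Fin v)} (h : ∑ i, x i * gen3 b i = 0) :
    Odd #(supp (x ∘ Sum.inl) ∩ b) := by
  have hlast : ∑ j, x (Sum.inr j) = 1 := by
    simp only [ZMod.eq_one_of_ne_zero (hx _), sum_const, card_univ, Fintype.card_fin]
    decide
  rw [sum_mul_gen3, hlast] at h
  rw [← ZMod.natCast_eq_one_iff_odd]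
  exact eq_neg_of_add_eq_zero_left h

section Design

variable {α : Type*} [DecidableEq α] {𝓑 : Finset (Finset α)}

theorem sum_choose_card_inter (t : ℕ) (S : Finset α) :
    ∑ b ∈ 𝓑, (#(S ∩ b)).choose t = ∑ T ∈ S.powersetCard t, #{b ∈ 𝓑 | T ⊆ b} := by
  have hsubsets (b : Finset α) : (S ∩ b).powersetCard t = {T ∈ S.powersetCard t | T ⊆ b} := by
    ext T
    simp only [mem_powersetCard, mem_filter, subset_inter_iff]
    tauto
  simp_rw [← card_powersetCard, hsubsets, card_filter]
  exact sum_comm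

theorem card_filter_mem_mul_eq [Fintype α] {k l : ℕ} (hk : ∀ b ∈ 𝓑, #b = k)
    (hl : ∀ T : Finset α, #T = 2 → #{b ∈ 𝓑 | T ⊆ b} = l) (p : α) :
    #{b ∈ 𝓑 | p ∈ b} * (k - 1) = (Fintype.card α - 1) * l := by
  have hpair : ∀ q ∈ univ.erase p, #{b ∈ {b ∈ 𝓑 | p ∈ b} | q ∈ b} = l := by
    intro q hq
    rw [filter_filter, ← hl {p, q} (card_pair (ne_of_mem_erase hq).symm)]
    simp only [insert_subset_iff, singleton_subset_iff]
  have hsize : ∀ b ∈ {b ∈ 𝓑 | p ∈ b}, #(univ.erase p ∩ b) = k - 1 := by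
    intro b hb
    obtain ⟨hb, hpb⟩ := mem_filter.mp hb
    rw [erase_inter, univ_inter, card_erase_of_mem hpb, hk b hb]
  have := sum_card_inter hpair
  rwa [sum_congr rfl hsize, sum_const, smul_eq_mul, card_erase_of_mem (mem_univ p),
    card_univ] at this

end Design

theorem card_filter_superset_eq_eight {𝓑 : Finset (Finset (Fin 37))} (hk : ∀ b ∈ 𝓑, #b = 9)
    (hl : ∀ T : Finset (Fin 37), #T = 2 → #{b ∈ 𝓑 | T ⊆ b} = 8) {S : Finset (Fin 37)}
    (hS : #S = 5) (hodd : ∀ b ∈ 𝓑, Odd #(S ∩ b)) : #{b ∈ 𝓑 | S ⊆ b} = 8 := by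
  have hr (p : Fin 37) : #{b ∈ 𝓑 | p ∈ b} = 36 := by
    have := card_filter_mem_mul_eq hk hl p
    simp only [Fintype.card_fin] at this
    omega
  have hb : #𝓑 = 148 := by
    have := sum_card hr
    rw [sum_congr rfl hk, sum_const, smul_eq_mul, Fintype.card_fin] at this
    omega
  have hsum : ∑ b ∈ 𝓑, #(S ∩ b) = 180 := by rw [sum_card_inter fun p _ => hr p, hS]
  have hsum_choose : ∑ b ∈ 𝓑, (#(S ∩ b)).choose 2 = 80 := by
    rw [sum_choose_card_inter, sum_congr rfl fun T hT => hl T (mem_powersetCard.mp hT).2,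
      sum_const, card_powersetCard, hS]
    rfl
  -- `(x - 1)(x - 3) = 2 C(x, 2) - 3x + 3`
  have hpoint : ∀ b ∈ 𝓑,
      3 + 2 * (#(S ∩ b)).choose 2 = 3 * #(S ∩ b) + if S ⊆ b then 8 else 0 := by
    intro b hb
    by_cases hSb : S ⊆ b
    · rw [inter_eq_left.mpr hSb, hS, if_pos hSb]
      rfl
    · have hlt : #(S ∩ b) < 5 :=
        hS ▸ card_lt_card ⟨inter_subset_left, fun h => hSb (h.trans inter_subset_right)⟩
      obtain ⟨m, hm⟩ := hodd b hb
      have : #(S ∩ b) = 1 ∨ #(S ∩ b) = 3 := by omega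
      rcases this with h | h <;> simp [h, hSb]
  have := sum_congr rfl hpoint
  rw [sum_add_distrib, sum_add_distrib, ← mul_sum, ← mul_sum, sum_const, hsum, hsum_choose, hb,
    ← sum_filter, sum_const] at this
  simp only [smul_eq_mul] at this
  omega

theorem no_weight_eight_on_last_three_general (𝓑 : Finset (Finset (Fin 37)))
    (hk : ∀ b ∈ 𝓑, b.card = 9)
    (hlam : ∀ T : Finset (Fin 37), T.card = 2 → (𝓑.filter fun b => T ⊆ b).card = 8)
    (hquasi : ∀ b₁ ∈ 𝓑, ∀ b₂ ∈ 𝓑, b₁ ≠ b₂ →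
      (b₁ ∩ b₂).card = 1 ∨ (b₁ ∩ b₂).card = 3)
    (C : Submodule (ZMod 2) (Fin 37 ⊕ Fin 3 → ZMod 2))
    (hselfdual : ∀ z : Fin 37 ⊕ Fin 3 → ZMod 2,
      z ∈ C ↔ ∀ c ∈ C, ∑ i, z i * c i = 0)
    (hsub : Submodule.span (ZMod 2) (gen3 '' (𝓑 : Set (Finset (Fin 37)))) ≤ C) :
    ¬ ∃ c ∈ C, wt c = 8 ∧ ∀ j : Fin 3, c (Sum.inr j) ≠ 0 := by
  rintro ⟨c, hcC, hwt, hlast⟩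
  set S := supp (c ∘ Sum.inl)
  have hS : #S = 5 := by
    have h := wt_eq_wt_comp_inl_add_wt_comp_inr c
    rw [wt_eq_card_of_forall_ne_zero (x := c ∘ Sum.inr) hlast, Fintype.card_fin, hwt] at h
    change wt (c ∘ Sum.inl) = 5
    omega
  have hodd : ∀ b ∈ 𝓑, Odd #(S ∩ b) := fun b hb =>
    odd_card_supp_inter_of_sum_mul_gen3_eq_zero hlast <|
      (hselfdual c).mp hcC _ (hsub (Submodule.subset_span ⟨b, hb, rfl⟩))
  have htwo : 1 < #{b ∈ 𝓑 | S ⊆ b} := by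
    rw [card_filter_superset_eq_eight hk hlam hS hodd]
    norm_num
  obtain ⟨b₁, hb₁, b₂, hb₂, hne⟩ := one_lt_card.mp htwo
  rw [mem_filter] at hb₁ hb₂
  have hfive : 5 ≤ #(b₁ ∩ b₂) := hS ▸ card_le_card (subset_inter hb₁.2 hb₂.2)
  rcases hquasi b₁ hb₁.1 b₂ hb₂.1 hne with h | h <;> omega

/-- Let `𝓑` be the block set of a quasi-symmetric 2-(37,9,8) design with
intersection numbers 1 and 3, and let `C` be a doubly even self-dual code of
length 40 containing the span `C₃` of the vectors `(χ_B, 1, 1, 1)`.  Then `C` has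
no codeword of weight 8 whose support contains the last three coordinates. -/
theorem no_weight_eight_on_last_three (𝓑 : Finset (Finset (Fin 37)))
    (hk : ∀ b ∈ 𝓑, b.card = 9)
    (hlam : ∀ T : Finset (Fin 37), T.card = 2 → (𝓑.filter fun b => T ⊆ b).card = 8)
    (hquasi : ∀ b₁ ∈ 𝓑, ∀ b₂ ∈ 𝓑, b₁ ≠ b₂ →
      (b₁ ∩ b₂).card = 1 ∨ (b₁ ∩ b₂).card = 3)
    (C : Submodule (ZMod 2) (Fin 37 ⊕ Fin 3 → ZMod 2))
    (hselfdual : ∀ z : Fin 37 ⊕ Fin 3 → ZMod 2,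
      z ∈ C ↔ ∀ c ∈ C, ∑ i, z i * c i = 0)
    (hde : ∀ c ∈ C, 4 ∣ wt c)
    (hsub : Submodule.span (ZMod 2) (gen3 '' (𝓑 : Set (Finset (Fin 37)))) ≤ C) :
    ¬ ∃ c ∈ C, wt c = 8 ∧ ∀ j : Fin 3, c (Sum.inr j) ≠ 0 :=
  no_weight_eight_on_last_three_general 𝓑 hk hlam hquasi C hselfdual hsub
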